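/- arXiv:2407.05763 — 2 statements merged into one kernel-verified Lean document; each statement's English description precedes it below -/
import Mathlib

section
/- Let G ∈ ℝ^{n×n} and let P ∈ ℝ^{n×n} be symmetric positive definite with PG + GᵀP ≻ 0. Define ‖y‖_P = √(yᵀPy). Then: (i) for every x ∈ ℝ^n \ {0} there exists a unique s_x ∈ ℝ such that ‖exp(−s_x G)x‖_P = 1; (ii) for all x ≠ 0 and all t ∈ ℝ, s_{exp(tG)x} = s_x + t; (iii) the canonical homogeneous norm ‖x‖_d := e^{s_x} (with ‖0‖_d := 0) is continuous on ℝ^n, i.e. it is continuous on ℝ^n \ {0} and ‖x‖_d → 0 as x → 0. -/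
/-
Statement 4: well-posedness, homogeneity and continuity of the
canonical homogeneous norm induced by ‖·‖_P and the dilation d(s) = exp(sG).
-/

open Matrix
open scoped Classical

/-- The weighted Euclidean norm ‖x‖_P = √(xᵀPx). -/
noncomputable def wnorm {ι : Type*} [Fintype ι] (P : Matrix ι ι ℝ) (x : ι → ℝ) : ℝ :=
  Real.sqrt (x ⬝ᵥ P.mulVec x)

/-!
Along an orbit `y(t) = exp(tG) x` with `x ≠ 0` one has `d/dt ‖y‖_P² = yᵀ(PG + GᵀP)y`, which is
positive and, by compactness of the unit sphere, at least `α ‖y‖_P²` for some `α > 0`. Hence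
`t ↦ ‖exp(tG) x‖_P` is strictly increasing and, by the Grönwall bound `‖y(t)‖_P² ≥ e^{αt} ‖x‖_P²`
for `t ≥ 0` (reversed for `t ≤ 0`), takes the value `1` exactly once. Homogeneity is the group law
`exp((s + t)G) = exp(sG) exp(tG)`. For continuity, monotonicity turns `{‖x‖_d < r}` and
`{‖x‖_d > r}` (for `r > 0`) into `{‖exp(-(log r) G) x‖_P < 1}` and `{‖exp(-(log r) G) x‖_P > 1}`,
which are open.
-/

open Filter Set

theorem monotone_exp_neg_mul_of_mul_le_deriv {f f' : ℝ → ℝ} {α : ℝ}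
    (hf : ∀ t, HasDerivAt f (f' t) t) (hf' : ∀ t, α * f t ≤ f' t) :
    Monotone fun t => Real.exp (-(α * t)) * f t := by
  refine monotone_of_hasDerivAt_nonneg
    (f' := fun t => Real.exp (-(α * t)) * (f' t - α * f t)) (fun t => ?_) (fun t => ?_)
  · have hlin : HasDerivAt (fun t => -(α * t)) (-α) t := by
      simpa using ((hasDerivAt_id t).const_mul α).fun_neg
    exact (hlin.exp.fun_mul (hf t)).congr_deriv (by ring)
  · exact mul_nonneg (Real.exp_pos _).le (sub_nonneg.2 (hf' t))

theorem exists_eq_of_monotone_exp_neg_mul {f : ℝ → ℝ} {α c : ℝ} (hα : 0 < α)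
    (hf : Continuous f) (hmono : Monotone fun t => Real.exp (-(α * t)) * f t) (h0 : 0 < f 0)
    (hc : 0 < c) : ∃ t, f t = c := by
  have hf_eq : ∀ t, Real.exp (α * t) * (Real.exp (-(α * t)) * f t) = f t := fun t => by
    rw [← mul_assoc, ← Real.exp_add, add_neg_cancel, Real.exp_zero, one_mul]
  have hg0 : Real.exp (-(α * 0)) * f 0 = f 0 := by simp
  have hexp_le : ∀ t, 0 ≤ t → f 0 * Real.exp (α * t) ≤ f t := fun t ht => by
    rw [← hf_eq t, mul_comm, ← hg0]
    exact mul_le_mul_of_nonneg_left (hmono ht) (Real.exp_pos _).le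
  have hle_exp : ∀ t, t ≤ 0 → f t ≤ f 0 * Real.exp (α * t) := fun t ht => by
    rw [← hf_eq t, mul_comm (f 0), ← hg0]
    exact mul_le_mul_of_nonneg_left (hmono ht) (Real.exp_pos _).le
  have hTop : Tendsto (fun t => f 0 * Real.exp (α * t)) atTop atTop :=
    (Real.tendsto_exp_atTop.comp (tendsto_id.const_mul_atTop hα)).const_mul_atTop h0
  have hBot : Tendsto (fun t => f 0 * Real.exp (α * t)) atBot (nhds 0) := by
    simpa using (Real.tendsto_exp_atBot.comp (tendsto_id.const_mul_atBot hα)).const_mul (f 0)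
  refine mem_range_of_exists_le_of_exists_ge hf ?_ ?_
  · obtain ⟨t, ht, ht0⟩ := ((hBot.eventually (gt_mem_nhds hc)).and (eventually_le_atBot 0)).exists
    exact ⟨t, (hle_exp t ht0).trans ht.le⟩
  · obtain ⟨t, ht, ht0⟩ := ((hTop.eventually_ge_atTop c).and (eventually_ge_atTop 0)).exists
    exact ⟨t, ht.trans (hexp_le t ht0)⟩

theorem continuous_of_nonneg_of_isOpen_lt_of_isOpen_gt {X : Type*} [TopologicalSpace X]
    {N : X → ℝ} (h0 : ∀ x, 0 ≤ N x) (hlt : ∀ r > 0, IsOpen {x | N x < r})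
    (hgt : ∀ r > 0, IsOpen {x | r < N x}) : Continuous N := by
  refine continuous_iff_continuousAt.2 fun x => tendsto_order.2 ⟨fun a ha => ?_, fun a ha => ?_⟩
  · rcases lt_or_ge a 0 with ha0 | ha0
    · exact Eventually.of_forall fun y => ha0.trans_le (h0 y)
    · obtain ⟨b, hab, hb⟩ := exists_between ha
      filter_upwards [(hgt b (ha0.trans_lt hab)).mem_nhds hb] with y hy using hab.trans hy
  · exact (hlt a ((h0 x).trans_lt ha)).mem_nhds ha

section

variable {ι : Type*} [Fintype ι]

theorem HasDerivAt.dotProduct {u v : ℝ → ι → ℝ} {u' v' : ι → ℝ} {t : ℝ}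
    (hu : HasDerivAt u u' t) (hv : HasDerivAt v v' t) :
    HasDerivAt (fun t => u t ⬝ᵥ v t) (u' ⬝ᵥ v t + u t ⬝ᵥ v') t := by
  have h := HasDerivAt.fun_sum fun i (_ : i ∈ Finset.univ) =>
    (hasDerivAt_pi.1 hu i).fun_mul (hasDerivAt_pi.1 hv i)
  simpa only [_root_.dotProduct, Finset.sum_add_distrib] using h

theorem HasDerivAt.const_mulVec {m : Type*} (A : Matrix m ι ℝ) {u : ℝ → ι → ℝ} {u' : ι → ℝ}
    {t : ℝ} (hu : HasDerivAt u u' t) : HasDerivAt (fun t => A *ᵥ u t) (A *ᵥ u') t :=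
  hasDerivAt_pi.2 fun i => by
    have h := (hasDerivAt_const t (A i)).dotProduct hu
    rwa [zero_dotProduct, zero_add] at h

theorem smul_dotProduct_mulVec_smul (A : Matrix ι ι ℝ) (a : ℝ) (y : ι → ℝ) :
    (a • y) ⬝ᵥ A *ᵥ (a • y) = a ^ 2 * (y ⬝ᵥ A *ᵥ y) := by
  rw [mulVec_smul, smul_dotProduct, dotProduct_smul, smul_eq_mul, smul_eq_mul, sq, mul_assoc]

theorem continuous_dotProduct_mulVec_self (A : Matrix ι ι ℝ) :
    Continuous fun y : ι → ℝ => y ⬝ᵥ A *ᵥ y :=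
  continuous_id.dotProduct (continuous_const.matrix_mulVec continuous_id)

theorem Matrix.PosDef.exists_pos_mul_dotProduct_mulVec_le {Q : Matrix ι ι ℝ} (hQ : Q.PosDef)
    (P : Matrix ι ι ℝ) : ∃ α > 0, ∀ y : ι → ℝ, α * (y ⬝ᵥ P *ᵥ y) ≤ y ⬝ᵥ Q *ᵥ y := by
  have hS : IsCompact (Metric.sphere (0 : ι → ℝ) 1) := isCompact_sphere 0 1
  obtain ⟨c, hc, hcQ⟩ := hS.exists_forall_le' (continuous_dotProduct_mulVec_self Q).continuousOn
    fun u hu => by simpa using hQ.dotProduct_mulVec_pos (ne_zero_of_mem_unit_sphere ⟨u, hu⟩)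
  obtain ⟨C, hC⟩ := hS.bddAbove_image (continuous_dotProduct_mulVec_self P).continuousOn
  refine ⟨c / (|C| + 1), by positivity, fun y => ?_⟩
  rcases eq_or_ne y 0 with rfl | hy
  · simp
  have hy' : 0 < ‖y‖⁻¹ ^ 2 := by positivity
  have hu : ‖y‖⁻¹ • y ∈ Metric.sphere (0 : ι → ℝ) 1 := by
    simp [norm_smul, norm_ne_zero_iff.2 hy]
  have hsphere : c / (|C| + 1) * ((‖y‖⁻¹ • y) ⬝ᵥ P *ᵥ (‖y‖⁻¹ • y))
      ≤ (‖y‖⁻¹ • y) ⬝ᵥ Q *ᵥ (‖y‖⁻¹ • y) :=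
    calc c / (|C| + 1) * ((‖y‖⁻¹ • y) ⬝ᵥ P *ᵥ (‖y‖⁻¹ • y))
        ≤ c / (|C| + 1) * (|C| + 1) := by
          gcongr
          exact (hC ⟨_, hu, rfl⟩).trans ((le_abs_self C).trans (le_add_of_nonneg_right zero_le_one))
      _ = c := div_mul_cancel₀ c (by positivity)
      _ ≤ _ := hcQ _ hu
  rw [smul_dotProduct_mulVec_smul, smul_dotProduct_mulVec_smul, mul_left_comm] at hsphere
  exact le_of_mul_le_mul_left hsphere hy'

theorem dotProduct_mul_add_transpose_mul_mulVec (P G : Matrix ι ι ℝ) (y : ι → ℝ) :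
    y ⬝ᵥ (P * G + Gᵀ * P) *ᵥ y = (G *ᵥ y) ⬝ᵥ P *ᵥ y + y ⬝ᵥ P *ᵥ (G *ᵥ y) := by
  rw [add_mulVec, dotProduct_add, ← mulVec_mulVec, ← mulVec_mulVec, dotProduct_mulVec y Gᵀ,
    vecMul_transpose, add_comm]

variable [DecidableEq ι]

theorem hasDerivAt_exp_smul_mulVec (G : Matrix ι ι ℝ) (x : ι → ℝ) (t : ℝ) :
    HasDerivAt (fun t : ℝ => NormedSpace.exp (t • G) *ᵥ x)
      (G *ᵥ (NormedSpace.exp (t • G) *ᵥ x)) t := by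
  rw [mulVec_mulVec]
  open scoped Norms.Operator in
  exact (LinearMap.toContinuousLinearMap ((mulVecBilin ℝ ℝ).flip x)).hasFDerivAt.comp_hasDerivAt
    t (hasDerivAt_exp_smul_const' (𝕂 := ℝ) G t)

theorem exp_add_smul_mulVec (G : Matrix ι ι ℝ) (x : ι → ℝ) (s t : ℝ) :
    NormedSpace.exp ((s + t) • G) *ᵥ x
      = NormedSpace.exp (s • G) *ᵥ (NormedSpace.exp (t • G) *ᵥ x) := by
  rw [add_smul, Matrix.exp_add_of_commute _ _ (((Commute.refl G).smul_left s).smul_right t),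
    mulVec_mulVec]

theorem exp_smul_mulVec_ne_zero (G : Matrix ι ι ℝ) {x : ι → ℝ} (hx : x ≠ 0) (t : ℝ) :
    NormedSpace.exp (t • G) *ᵥ x ≠ 0 := by
  intro h
  have h' := exp_add_smul_mulVec G x (-t) t
  rw [neg_add_cancel, zero_smul, NormedSpace.exp_zero, one_mulVec, h, mulVec_zero] at h'
  exact hx h'

theorem hasDerivAt_dotProduct_mulVec_exp_smul_mulVec (G P : Matrix ι ι ℝ) (x : ι → ℝ) (t : ℝ) :
    HasDerivAt
      (fun t : ℝ => NormedSpace.exp (t • G) *ᵥ x ⬝ᵥ P *ᵥ (NormedSpace.exp (t • G) *ᵥ x))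
      (NormedSpace.exp (t • G) *ᵥ x ⬝ᵥ (P * G + Gᵀ * P) *ᵥ (NormedSpace.exp (t • G) *ᵥ x)) t := by
  have hy := hasDerivAt_exp_smul_mulVec G x t
  rw [dotProduct_mul_add_transpose_mul_mulVec]
  exact hy.dotProduct (hy.const_mulVec P)

variable {G P : Matrix ι ι ℝ}

theorem strictMono_wnorm_exp_smul_mulVec (hP : P.PosDef) (hPG : (P * G + Gᵀ * P).PosDef)
    {x : ι → ℝ} (hx : x ≠ 0) : StrictMono fun t : ℝ => wnorm P (NormedSpace.exp (t • G) *ᵥ x) := by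
  have hq := strictMono_of_hasDerivAt_pos (hasDerivAt_dotProduct_mulVec_exp_smul_mulVec G P x)
    fun t => by simpa using hPG.dotProduct_mulVec_pos (exp_smul_mulVec_ne_zero G hx t)
  exact fun s t hst => Real.sqrt_lt_sqrt
    (by simpa only [star_trivial] using hP.posSemidef.dotProduct_mulVec_nonneg _) (hq hst)

theorem exists_wnorm_exp_smul_mulVec_eq_one (hP : P.PosDef) (hPG : (P * G + Gᵀ * P).PosDef)
    {x : ι → ℝ} (hx : x ≠ 0) : ∃ t : ℝ, wnorm P (NormedSpace.exp (t • G) *ᵥ x) = 1 := by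
  obtain ⟨α, hα, hαPG⟩ := hPG.exists_pos_mul_dotProduct_mulVec_le P
  have hderiv := hasDerivAt_dotProduct_mulVec_exp_smul_mulVec G P x
  obtain ⟨t, ht⟩ := exists_eq_of_monotone_exp_neg_mul hα
    (continuous_iff_continuousAt.2 fun t => (hderiv t).continuousAt)
    (monotone_exp_neg_mul_of_mul_le_deriv hderiv fun t => hαPG _)
    (by simpa using hP.dotProduct_mulVec_pos hx) one_pos
  exact ⟨t, by rw [wnorm, ht, Real.sqrt_one]⟩

theorem existsUnique_wnorm_exp_neg_smul_mulVec_eq_one (hP : P.PosDef)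
    (hPG : (P * G + Gᵀ * P).PosDef) {x : ι → ℝ} (hx : x ≠ 0) :
    ∃! s : ℝ, wnorm P (NormedSpace.exp ((-s) • G) *ᵥ x) = 1 := by
  obtain ⟨t, ht⟩ := exists_wnorm_exp_smul_mulVec_eq_one hP hPG hx
  refine ⟨-t, by simpa only [neg_neg] using ht, fun s hs => ?_⟩
  have := (strictMono_wnorm_exp_smul_mulVec hP hPG hx).injective (hs.trans ht.symm)
  linarith

theorem eq_add_of_wnorm_exp_neg_smul_mulVec_eq_one (hP : P.PosDef)
    (hPG : (P * G + Gᵀ * P).PosDef) {x : ι → ℝ} (hx : x ≠ 0) {s s' t : ℝ}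
    (hs : wnorm P (NormedSpace.exp ((-s) • G) *ᵥ x) = 1)
    (hs' : wnorm P (NormedSpace.exp ((-s') • G) *ᵥ (NormedSpace.exp (t • G) *ᵥ x)) = 1) :
    s' = s + t := by
  rw [← exp_add_smul_mulVec] at hs'
  have := (strictMono_wnorm_exp_smul_mulVec hP hPG hx).injective (hs'.trans hs.symm)
  linarith

theorem continuous_wnorm_exp_smul_mulVec (G P : Matrix ι ι ℝ) (t : ℝ) :
    Continuous fun x : ι → ℝ => wnorm P (NormedSpace.exp (t • G) *ᵥ x) :=
  Real.continuous_sqrt.comp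
    ((continuous_dotProduct_mulVec_self P).comp (continuous_const.matrix_mulVec continuous_id))

theorem continuous_ite_exp_of_wnorm_exp_neg_smul_mulVec_eq_one (hP : P.PosDef)
    (hPG : (P * G + Gᵀ * P).PosDef) {s : (ι → ℝ) → ℝ}
    (hs : ∀ x, x ≠ 0 → wnorm P (NormedSpace.exp ((-(s x)) • G) *ᵥ x) = 1) :
    Continuous fun x : ι → ℝ => if x = 0 then (0 : ℝ) else Real.exp (s x) := by
  refine continuous_of_nonneg_of_isOpen_lt_of_isOpen_gt
    (fun x => by split_ifs <;> positivity) (fun r hr => ?_) (fun r hr => ?_)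
  · convert isOpen_lt (continuous_wnorm_exp_smul_mulVec G P (-Real.log r))
      (continuous_const (y := 1)) using 1
    ext x
    by_cases hx : x = 0
    · simp [hx, hr, wnorm]
    · rw [mem_ofPred_eq, mem_ofPred_eq, if_neg hx, ← Real.lt_log_iff_exp_lt hr, ← hs x hx,
        (strictMono_wnorm_exp_smul_mulVec hP hPG hx).lt_iff_lt, neg_lt_neg_iff]
  · convert isOpen_lt (continuous_const (y := 1))
      (continuous_wnorm_exp_smul_mulVec G P (-Real.log r)) using 1
    ext x
    by_cases hx : x = 0
    · simp [hx, hr.not_gt, wnorm]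
    · rw [mem_ofPred_eq, mem_ofPred_eq, if_neg hx, ← Real.log_lt_iff_lt_exp hr, ← hs x hx,
        (strictMono_wnorm_exp_smul_mulVec hP hPG hx).lt_iff_lt, neg_lt_neg_iff]

end

theorem canonical_homogeneous_norm_well_posed_general
    (n : ℕ)
    (G P : Matrix (Fin n) (Fin n) ℝ)
    (hP : P.PosDef)
    (hPG : (P * G + Gᵀ * P).PosDef) :
    -- (i) existence and uniqueness of s_x for x ≠ 0
    (∀ x : Fin n → ℝ, x ≠ 0 →
      ∃! s : ℝ, wnorm P ((NormedSpace.exp ((-s) • G)).mulVec x) = 1) ∧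
    -- for any function x ↦ s_x realizing the defining property:
    ∀ sfun : (Fin n → ℝ) → ℝ,
      (∀ x, x ≠ 0 → wnorm P ((NormedSpace.exp ((-(sfun x)) • G)).mulVec x) = 1) →
      -- (ii) s_{d(t)x} = s_x + t
      ((∀ x : Fin n → ℝ, x ≠ 0 → ∀ t : ℝ,
          sfun ((NormedSpace.exp (t • G)).mulVec x) = sfun x + t) ∧
      -- (iii) continuity of the canonical homogeneous norm ‖x‖_d = e^{s_x}, ‖0‖_d = 0
        Continuous (fun x : Fin n → ℝ =>
          if x = 0 then (0 : ℝ) else Real.exp (sfun x))) := by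
  refine ⟨fun x hx => existsUnique_wnorm_exp_neg_smul_mulVec_eq_one hP hPG hx,
    fun sfun hsfun => ⟨fun x hx t => ?_, ?_⟩⟩
  · exact eq_add_of_wnorm_exp_neg_smul_mulVec_eq_one hP hPG hx (hsfun x hx)
      (hsfun _ (exp_smul_mulVec_ne_zero G hx t))
  · exact continuous_ite_exp_of_wnorm_exp_neg_smul_mulVec_eq_one hP hPG hsfun

theorem canonical_homogeneous_norm_well_posed
    (n : ℕ) (hn : 0 < n)
    (G P : Matrix (Fin n) (Fin n) ℝ)
    (hP : P.PosDef)
    (hPG : (P * G + Gᵀ * P).PosDef) :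
    -- (i) existence and uniqueness of s_x for x ≠ 0
    (∀ x : Fin n → ℝ, x ≠ 0 →
      ∃! s : ℝ, wnorm P ((NormedSpace.exp ((-s) • G)).mulVec x) = 1) ∧
    -- for any function x ↦ s_x realizing the defining property:
    ∀ sfun : (Fin n → ℝ) → ℝ,
      (∀ x, x ≠ 0 → wnorm P ((NormedSpace.exp ((-(sfun x)) • G)).mulVec x) = 1) →
      -- (ii) s_{d(t)x} = s_x + t
      ((∀ x : Fin n → ℝ, x ≠ 0 → ∀ t : ℝ,
          sfun ((NormedSpace.exp (t • G)).mulVec x) = sfun x + t) ∧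
      -- (iii) continuity of the canonical homogeneous norm ‖x‖_d = e^{s_x}, ‖0‖_d = 0
        Continuous (fun x : Fin n → ℝ =>
          if x = 0 then (0 : ℝ) else Real.exp (sfun x))) :=
  canonical_homogeneous_norm_well_posed_general n G P hP hPG
end

section
/- Let M ∈ ℝ^{n×n} be a matrix all of whose complex eigenvalues have strictly positive real part (anti-Hurwitz), and let H ∈ ℝ^{n×p}. Then the map w ↦ exp(ln|w|·M)·H·(w/|w|), defined for w ∈ ℝ^p \ {0}, tends to 0 as w → 0; consequently the map w ↦ exp(ln|w|·M)·H·(w/|w|) extended by 0 at w = 0 is continuous at 0. -/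
/-!
Over `ℂ` every vector is a sum of generalized eigenvectors of `M`. On a generalized eigenvector
for `μ` the exponential series of `t • M` terminates after the factor `exp (t μ)`, so
`exp (t • M)` acts as `exp (t μ)` times a polynomial in `t`, which tends to `0` as `t → -∞`
because `0 < re μ`. Hence `exp (t • M) → 0` as `t → -∞`. As `w → 0`, `log |w| → -∞` while
`H (w / |w|)` stays bounded, so the injection term tends to `0`, and continuity of its extension
by `0` at the origin is the same statement.
-/

open Matrix Filter

noncomputable def euclNorm {ι : Type*} [Fintype ι] (x : ι → ℝ) : ℝ :=
  Real.sqrt (x ⬝ᵥ x)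

open NormedSpace Topology Finset
open scoped Nat

attribute [local instance] Matrix.linftyOpNormedAddCommGroup Matrix.linftyOpNormedRing
  Matrix.linftyOpNormedAlgebra

theorem Complex.tendsto_exp_mul_mul_pow_atBot {μ : ℂ} (hμ : 0 < μ.re) (j : ℕ) :
    Tendsto (fun t : ℝ => Complex.exp (t * μ) * (t : ℂ) ^ j) atBot (𝓝 0) := by
  rw [tendsto_zero_iff_norm_tendsto_zero]
  have hdecay := (tendsto_rpow_mul_exp_neg_mul_atTop_nhds_zero j μ.re hμ).comp
    tendsto_neg_atBot_atTop
  refine hdecay.congr' ?_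
  filter_upwards [eventually_le_atBot 0] with t ht
  simp [Complex.norm_exp, abs_of_nonpos ht, mul_comm]

theorem ContinuousLinearMap.map_exp_eq_sum_of_map_pow_eq_zero {𝕂 𝔸 E : Type*} [RCLike 𝕂]
    [NormedRing 𝔸] [NormedAlgebra 𝕂 𝔸] [CompleteSpace 𝔸] [NormedAddCommGroup E]
    [NormedSpace 𝕂 E] (L : 𝔸 →L[𝕂] E) {x : 𝔸} {K : ℕ} (hK : ∀ j, K ≤ j → L (x ^ j) = 0) :
    L (exp x) = ∑ j ∈ range K, (j !⁻¹ : 𝕂) • L (x ^ j) := by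
  rw [exp_eq_tsum 𝕂, L.map_tsum (expSeries_summable' x), tsum_eq_sum (s := range K)]
  · simp only [map_smul]
  · intro j hj
    rw [map_smul, hK j (by simpa using hj), smul_zero]

namespace Matrix

variable {m 𝕂 : Type*} [Fintype m] [DecidableEq m] [RCLike 𝕂]

theorem exp_mulVec_eq_sum_of_pow_mulVec_eq_zero {N : Matrix m m 𝕂} {y : m → 𝕂} {K : ℕ}
    (hK : (N ^ K) *ᵥ y = 0) :
    exp N *ᵥ y = ∑ j ∈ range K, (j !⁻¹ : 𝕂) • ((N ^ j) *ᵥ y) := by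
  let L : Matrix m m 𝕂 →L[𝕂] (m → 𝕂) := LinearMap.toContinuousLinearMap
    { toFun := (· *ᵥ y), map_add' := (add_mulVec · · y), map_smul' := (smul_mulVec · · y) }
  refine L.map_exp_eq_sum_of_map_pow_eq_zero fun j hj => ?_
  change (N ^ j) *ᵥ y = 0
  rw [← Nat.sub_add_cancel hj, pow_add, ← mulVec_mulVec, hK, mulVec_zero]

theorem exp_mulVec_eq_of_sub_smul_pow_mulVec_eq_zero {A : Matrix m m 𝕂} {μ : 𝕂} {y : m → 𝕂}
    {K : ℕ} (hK : ((A - μ • 1) ^ K) *ᵥ y = 0) :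
    exp A *ᵥ y = exp μ • ∑ j ∈ range K, (j !⁻¹ : 𝕂) • (((A - μ • 1) ^ j) *ᵥ y) := by
  have hexp : exp A = exp μ • exp (A - μ • 1) := by
    have hcomm : Commute (μ • (1 : Matrix m m 𝕂)) (A - μ • 1) :=
      (Commute.one_left _).smul_left μ
    have hscalar : exp (μ • (1 : Matrix m m 𝕂)) = exp μ • 1 := by
      rw [← Algebra.algebraMap_eq_smul_one, ← Algebra.algebraMap_eq_smul_one]
      exact (algebraMap_exp_comm μ).symm
    calc exp A = exp (μ • 1 + (A - μ • 1)) := by rw [add_sub_cancel]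
      _ = exp μ • exp (A - μ • 1) := by
        rw [exp_add_of_commute _ _ hcomm, hscalar, smul_one_mul]
  rw [hexp, smul_mulVec, exp_mulVec_eq_sum_of_pow_mulVec_eq_zero hK]

theorem tendsto_exp_smul_mulVec_atBot_of_sub_smul_pow_mulVec_eq_zero {A : Matrix m m ℂ} {μ : ℂ}
    (hμ : 0 < μ.re) {y : m → ℂ} {K : ℕ} (hK : ((A - μ • 1) ^ K) *ᵥ y = 0) :
    Tendsto (fun t : ℝ => exp (t • A) *ᵥ y) atBot (𝓝 0) := by
  have hexpand : ∀ t : ℝ, exp (t • A) *ᵥ y = ∑ j ∈ range K,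
      (Complex.exp (t * μ) * (t : ℂ) ^ j) • ((j !⁻¹ : ℂ) • (((A - μ • 1) ^ j) *ᵥ y)) := by
    intro t
    have hsub : t • A - ((t : ℂ) * μ) • 1 = (t : ℂ) • (A - μ • 1) := by
      rw [smul_sub, smul_smul, Complex.coe_smul]
    have htK : ((t • A - ((t : ℂ) * μ) • 1) ^ K) *ᵥ y = 0 := by
      rw [hsub, smul_pow, smul_mulVec, hK, smul_zero]
    rw [exp_mulVec_eq_of_sub_smul_pow_mulVec_eq_zero htK, smul_sum, ← Complex.exp_eq_exp_ℂ]
    refine sum_congr rfl fun j _ => ?_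
    rw [hsub, smul_pow, smul_mulVec, smul_comm _ ((t : ℂ) ^ j), smul_smul, mul_smul]
  simp only [hexpand]
  rw [← sum_const_zero (s := range K)]
  refine tendsto_finsetSum _ fun j _ => ?_
  simpa using (Complex.tendsto_exp_mul_mul_pow_atBot hμ j).smul_const
    ((j !⁻¹ : ℂ) • (((A - μ • 1) ^ j) *ᵥ y))

theorem tendsto_exp_smul_mulVec_atBot {A : Matrix m m ℂ} (hA : ∀ z ∈ spectrum ℂ A, 0 < z.re)
    (y : m → ℂ) : Tendsto (fun t : ℝ => exp (t • A) *ᵥ y) atBot (𝓝 0) := by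
  set f : Module.End ℂ (m → ℂ) := toLinAlgEquiv' A
  have hy : y ∈ ⨆ μ, f.maxGenEigenspace μ := by
    simp [Module.End.iSup_maxGenEigenspace_eq_top]
  refine Submodule.iSup_induction _
    (motive := fun x => Tendsto (fun t : ℝ => exp (t • A) *ᵥ x) atBot (𝓝 0)) hy
    (fun μ x hx => ?_) (by simp) fun x z hx hz => by simpa [mulVec_add] using hx.add hz
  rcases eq_or_ne x 0 with rfl | hx0
  · simp
  have hμ : μ ∈ spectrum ℂ A := by
    have htop : f.HasUnifEigenvalue μ ⊤ := fun h => hx0 ((Submodule.eq_bot_iff _).1 h x hx)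
    rw [← AlgEquiv.spectrum_eq toLinAlgEquiv' A]
    exact ((Module.End.hasUnifEigenvalue_iff_hasUnifEigenvalue_one (by simp)).1 htop).mem_spectrum
  obtain ⟨K, hK⟩ := (f.mem_maxGenEigenspace μ x).1 hx
  refine tendsto_exp_smul_mulVec_atBot_of_sub_smul_pow_mulVec_eq_zero (hA μ hμ) (K := K) ?_
  rwa [← toLinAlgEquiv'_apply, map_pow, map_sub, map_smul, map_one]

theorem tendsto_exp_smul_atBot {A : Matrix m m ℂ} (hA : ∀ z ∈ spectrum ℂ A, 0 < z.re) :
    Tendsto (fun t : ℝ => exp (t • A)) atBot (𝓝 0) := by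
  refine tendsto_pi_nhds.2 fun i => tendsto_pi_nhds.2 fun j => ?_
  simpa [mulVec_single_one] using
    tendsto_pi_nhds.1 (tendsto_exp_smul_mulVec_atBot hA (Pi.single j 1)) i

theorem exp_map_algebraMap (A : Matrix m m ℝ) :
    (exp A).map (algebraMap ℝ ℂ) = exp (A.map (algebraMap ℝ ℂ)) :=
  map_exp (algebraMap ℝ ℂ).mapMatrix (continuous_id.matrix_map Complex.continuous_ofReal) A

theorem tendsto_exp_smul_atBot_of_map_algebraMap {M : Matrix m m ℝ}
    (hM : ∀ z ∈ spectrum ℂ (M.map (algebraMap ℝ ℂ)), 0 < z.re) :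
    Tendsto (fun t : ℝ => exp (t • M)) atBot (𝓝 0) := by
  have hre : ∀ t : ℝ, exp (t • M) = (exp (t • M.map (algebraMap ℝ ℂ))).map Complex.re := by
    intro t
    rw [← Matrix.map_smul _ t fun a => by simp, ← exp_map_algebraMap, Matrix.map_map]
    ext i j
    simp
  rw [funext hre, ← Matrix.map_zero Complex.re Complex.zero_re]
  exact ((continuous_id.matrix_map Complex.continuous_re).tendsto 0).comp
    (tendsto_exp_smul_atBot hM)

end Matrix

theorem euclNorm_eq_norm_toLp {ι : Type*} [Fintype ι] (x : ι → ℝ) :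
    euclNorm x = ‖WithLp.toLp 2 x‖ := by
  simp [euclNorm, EuclideanSpace.norm_eq, dotProduct, sq]

theorem norm_le_euclNorm {ι : Type*} [Fintype ι] (x : ι → ℝ) : ‖x‖ ≤ euclNorm x := by
  rw [euclNorm_eq_norm_toLp, pi_norm_le_iff_of_nonneg (norm_nonneg _)]
  exact fun i => PiLp.norm_apply_le (WithLp.toLp 2 x) i

theorem tendsto_log_euclNorm_nhdsNE_zero {ι : Type*} [Fintype ι] :
    Tendsto (fun x : ι → ℝ => Real.log (euclNorm x)) (𝓝[≠] 0) atBot := by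
  simp only [euclNorm_eq_norm_toLp]
  refine Real.tendsto_log_nhdsNE_zero.comp (tendsto_nhdsWithin_iff.2 ⟨?_, ?_⟩)
  · simpa using
      ((PiLp.continuous_toLp 2 fun _ : ι => ℝ).norm.tendsto 0).mono_left nhdsWithin_le_nhds
  · filter_upwards [self_mem_nhdsWithin] with x hx
    simpa using hx

theorem norm_inv_euclNorm_smul_le_one {ι : Type*} [Fintype ι] (x : ι → ℝ) :
    ‖(euclNorm x)⁻¹ • x‖ ≤ 1 := by
  have hnonneg : 0 ≤ euclNorm x := Real.sqrt_nonneg _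
  rw [norm_smul, norm_inv, Real.norm_of_nonneg hnonneg]
  exact inv_mul_le_one_of_le₀ (norm_le_euclNorm x) hnonneg

theorem tendsto_exp_log_euclNorm_smul_mulVec {m ι : Type*} [Fintype m] [DecidableEq m]
    [Fintype ι] {M : Matrix m m ℝ} (hM : Tendsto (fun t : ℝ => exp (t • M)) atBot (𝓝 0))
    (H : Matrix m ι ℝ) :
    Tendsto (fun w : ι → ℝ => exp (Real.log (euclNorm w) • M) *ᵥ (H *ᵥ ((euclNorm w)⁻¹ • w)))
      (𝓝[≠] 0) (𝓝 0) := by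
  have hbound : ∀ w : ι → ℝ, ‖exp (Real.log (euclNorm w) • M) *ᵥ (H *ᵥ ((euclNorm w)⁻¹ • w))‖
      ≤ ‖exp (Real.log (euclNorm w) • M)‖ * ‖H‖ := fun w =>
    calc _ ≤ ‖exp (Real.log (euclNorm w) • M)‖ * (‖H‖ * ‖(euclNorm w)⁻¹ • w‖) :=
          (linfty_opNorm_mulVec _ _).trans (by gcongr; exact linfty_opNorm_mulVec _ _)
      _ ≤ ‖exp (Real.log (euclNorm w) • M)‖ * ‖H‖ := by
          gcongr
          exact mul_le_of_le_one_right (norm_nonneg H) (norm_inv_euclNorm_smul_le_one w)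
  refine squeeze_zero_norm hbound ?_
  simpa using ((hM.comp tendsto_log_euclNorm_nhdsNE_zero).norm.mul_const ‖H‖)

theorem injection_term_vanishes_at_zero
    (n p : ℕ)
    (M : Matrix (Fin n) (Fin n) ℝ)
    -- M is anti-Hurwitz: all complex eigenvalues have strictly positive real part
    (hM : ∀ z : ℂ, z ∈ spectrum ℂ (M.map (algebraMap ℝ ℂ)) → 0 < z.re)
    (H : Matrix (Fin n) (Fin p) ℝ) :
    Tendsto
      (fun w : Fin p → ℝ =>
        (NormedSpace.exp (Real.log (euclNorm w) • M)).mulVec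
          (H.mulVec ((euclNorm w)⁻¹ • w)))
      (nhdsWithin 0 {0}ᶜ) (nhds 0) ∧
    ∀ F : (Fin p → ℝ) → (Fin n → ℝ),
      F 0 = 0 →
      (∀ w : Fin p → ℝ, w ≠ 0 →
        F w = (NormedSpace.exp (Real.log (euclNorm w) • M)).mulVec
          (H.mulVec ((euclNorm w)⁻¹ • w))) →
      ContinuousAt F 0 := by
  have hlim := tendsto_exp_log_euclNorm_smul_mulVec
    (Matrix.tendsto_exp_smul_atBot_of_map_algebraMap hM) H
  refine ⟨hlim, fun F hF0 hF => ?_⟩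
  rw [← continuousWithinAt_compl_self, ContinuousWithinAt, hF0]
  exact hlim.congr' (eventually_nhdsWithin_of_forall fun w hw => (hF w hw).symm)
end
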